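/- If a 3-graph G is F_{3,2}-free and contains no induced copy of K_4^- (i.e., no 4-set of vertices spans exactly 3 edges), then G is J_5-free. Consequently, any F_{3,2}-free 3-graph containing a copy of J_5 contains an induced copy of K_4^-. -/
import Mathlib


/-- `F₃,₂`: the 3-graph on 5 vertices with edges 123, 124, 125, 345. -/
def F32 : Finset (Finset (Fin 5)) := {{0,1,2},{0,1,3},{0,1,4},{2,3,4}}

/-- `J₅`: a vertex (labelled 5) together with a 5-set {0,...,4} and all 10 edges
containing the vertex and two vertices of the 5-set. -/
def J5 : Finset (Finset (Fin 6)) :=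
  {{0,1,5},{0,2,5},{0,3,5},{0,4,5},{1,2,5},{1,3,5},{1,4,5},{2,3,5},{2,4,5},{3,4,5}}

/-- `G` contains a copy of `H` as a subgraph. -/
def HasCopy {k : ℕ} {V : Type*} [DecidableEq V]
    (H : Finset (Finset (Fin k))) (G : Finset (Finset V)) : Prop :=
  ∃ f : Fin k → V, Function.Injective f ∧ ∀ e ∈ H, e.image f ∈ G

lemma aux1 : ∀ a b c : Fin 6, a ≠ b → a ≠ c → b ≠ c → a ≠ 5 → b ≠ 5 → c ≠ 5 →
    ∀ e : Finset (Fin 6), e ⊆ {a,b,c,5} → e.card = 3 →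
    e ∈ ({{a,b,c},{a,b,5},{a,c,5},{b,c,5}} : Finset (Finset (Fin 6)))  := by decide

lemma aux2 : ∀ a b c : Fin 6, a ≠ b → a ≠ c → b ≠ c → a ≠ 5 → b ≠ 5 → c ≠ 5 →
    ({{a,b,5},{a,c,5},{b,c,5}} : Finset (Finset (Fin 6))).card = 3 := by decide

lemma aux3 : ∀ a b c : Fin 6, a ≠ b → a ≠ c → b ≠ c → a ≠ 5 → b ≠ 5 → c ≠ 5 →
    ({a,b,c,5} : Finset (Fin 6)).card = 4 := by decide

lemma aux4 : ∀ a b : Fin 6, a ≠ b → a ≠ 5 → b ≠ 5 →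
    ({a, b, 5} : Finset (Fin 6)) ∈ J5 := by decide

/-- An `F₃,₂`-free 3-graph with no induced `K₄⁻` (no 4-set spanning exactly 3
edges) is `J₅`-free; consequently an `F₃,₂`-free 3-graph containing a copy of
`J₅` contains an induced copy of `K₄⁻`. -/
theorem F32_free_no_induced_K4minus_J5_free
    {V : Type*} [DecidableEq V] (G : Finset (Finset V))
    (h3 : ∀ e ∈ G, e.card = 3) (hF : ¬ HasCopy F32 G) :
    ((∀ S : Finset V, S.card = 4 → (G.filter (· ⊆ S)).card ≠ 3) → ¬ HasCopy J5 G) ∧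
    (HasCopy J5 G → ∃ S : Finset V, S.card = 4 ∧ (G.filter (· ⊆ S)).card = 3) := by
  have key : HasCopy J5 G → ∃ S : Finset V, S.card = 4 ∧ (G.filter (· ⊆ S)).card = 3 := by
    rintro ⟨f, hinj, hmem⟩
    -- all triples through the apex vertex `f 5` are edges
    have hedge : ∀ a b : Fin 6, a ≠ b → a ≠ 5 → b ≠ 5 →
        ({f a, f b, f 5} : Finset V) ∈ G := by
      intro a b hab ha hb
      have := hmem _ (aux4 a b hab ha hb)
      simpa using this
    -- there is a non-edge triple inside the 5-set, else we get an F32 copy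
    have hnon : ∃ a b c : Fin 6, a ≠ b ∧ a ≠ c ∧ b ≠ c ∧ a ≠ 5 ∧ b ≠ 5 ∧ c ≠ 5 ∧
        ({f a, f b, f c} : Finset V) ∉ G := by
      by_contra h
      push_neg at h
      apply hF
      refine ⟨f ∘ Fin.castSucc, hinj.comp (Fin.castSucc_injective 5), ?_⟩
      intro e he
      fin_cases he <;>
      · simp only [Finset.image_insert, Finset.image_singleton, Function.comp_apply]
        exact h _ _ _ (by decide) (by decide) (by decide) (by decide) (by decide) (by decide)
    obtain ⟨a, b, c, hab, hac, hbc, ha5, hb5, hc5, hno⟩ := hnon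
    refine ⟨Finset.image f {a, b, c, 5}, ?_, ?_⟩
    · rw [Finset.card_image_of_injective _ hinj]
      exact aux3 a b c hab hac hbc ha5 hb5 hc5
    · have hfilter : G.filter (· ⊆ Finset.image f {a, b, c, 5}) =
          Finset.image (fun e => e.image f)
            ({{a,b,5},{a,c,5},{b,c,5}} : Finset (Finset (Fin 6))) := by
        ext e
        simp only [Finset.mem_filter, Finset.mem_image]
        constructor
        · rintro ⟨heG, hsub⟩
          obtain ⟨e', he'sub, he'⟩ := Finset.subset_image_iff.mp hsub
          have hcard : e'.card = 3 := by
            have h3e := h3 e heG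
            rw [← he', Finset.card_image_of_injective _ hinj] at h3e
            exact h3e
          have hm := aux1 a b c hab hac hbc ha5 hb5 hc5 e' he'sub hcard
          simp only [Finset.mem_insert, Finset.mem_singleton] at hm
          rcases hm with h1 | h1 | h1 | h1
          · exfalso
            apply hno
            rw [← he', h1] at heG
            simpa using heG
          all_goals exact ⟨_, by simp [h1], he'⟩
        · rintro ⟨e', he', rfl⟩
          simp only [Finset.mem_insert, Finset.mem_singleton] at he'
          constructor
          · rcases he' with rfl | rfl | rfl <;>
            · simpa using hedge _ _ (by assumption) (by assumption) (by assumption)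
          · refine Finset.image_subset_image ?_
            rcases he' with rfl | rfl | rfl <;> intro x hx <;> simp at hx <;>
              rcases hx with rfl | rfl | rfl <;> simp
      rw [hfilter, Finset.card_image_of_injective _ (Finset.image_injective hinj)]
      exact aux2 a b c hab hac hbc ha5 hb5 hc5
  exact ⟨fun hInd hJ => by obtain ⟨S, h1, h2⟩ := key hJ; exact hInd S h1 h2, key⟩
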